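/- arXiv:1710.00021 — 2 statements merged into one kernel-verified Lean document; each statement's English description precedes it below -/
import Mathlib

section
/- For every real number x > 0, arsinh(1/sinh x) > 2 e^{-x}, and consequently arsinh(1/sinh x)^2 > 4 e^{-2x}. -/
/-!
Put `t = exp (-x) ∈ (0, 1)`. Then `1 / sinh x = 2t / (1 - t²) = sinh (2 artanh t)`, so
`arsinh (1 / sinh x) = 2 artanh t = ∑ 2 t ^ (2k+1) / (2k+1)`, a series of positive terms whose
first term is `2t`. Squaring gives the second inequality.
-/

open Real Set

namespace Real

theorem two_mul_artanh_eq_log_sub_log {t : ℝ} (ht : t ∈ Ioo (-1) 1) :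
    2 * artanh t = log (1 + t) - log (1 - t) := by
  rw [artanh_eq_half_log (Ioo_subset_Icc_self ht),
    log_div (by linarith [ht.1]) (by linarith [ht.2])]
  ring

theorem lt_artanh {t : ℝ} (ht : t ∈ Ioo 0 1) : t < artanh t := by
  have hseries := hasSum_log_sub_log_of_abs_lt_one (x := t)
    (abs_lt.2 ⟨by linarith [ht.1], ht.2⟩)
  rw [← two_mul_artanh_eq_log_sub_log ⟨by linarith [ht.1], ht.2⟩] at hseries
  have hle : (fun k : ℕ => if k = 0 then 2 * t else 0) ≤
      fun k : ℕ => 2 * (1 / (2 * (k : ℝ) + 1)) * t ^ (2 * k + 1) := by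
    have := ht.1
    intro k
    rcases eq_or_ne k 0 with rfl | hk
    · simp
    · simp only [hk, if_false]
      positivity
  have := hasSum_lt (i := 1) hle (by have := ht.1; norm_num; positivity)
    (hasSum_ite_eq 0 (2 * t)) hseries
  linarith

theorem sinh_two_mul_artanh {t : ℝ} (ht : t ∈ Ioo (-1) 1) :
    sinh (2 * artanh t) = 2 * t / (1 - t ^ 2) := by
  have hpos : 0 < 1 - t ^ 2 := by nlinarith [ht.1, ht.2]
  rw [sinh_two_mul, sinh_artanh ht, cosh_artanh ht]
  field_simp
  rw [sq_sqrt hpos.le]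

theorem arsinh_inv_sinh {x : ℝ} (hx : 0 < x) : arsinh (sinh x)⁻¹ = 2 * artanh (exp (-x)) := by
  have ht : exp (-x) ∈ Ioo (-1) 1 := ⟨by linarith [exp_pos (-x)], exp_lt_one_iff.2 (by linarith)⟩
  rw [← arsinh_sinh (2 * artanh _), sinh_two_mul_artanh ht]
  congr 1
  rw [sinh_eq, exp_neg]
  have := exp_pos x
  field_simp

end Real

theorem stmt_2 (x : ℝ) (hx : 0 < x) :
    2 * Real.exp (-x) < Real.arsinh (1 / Real.sinh x) ∧
      4 * Real.exp (-2 * x) < (Real.arsinh (1 / Real.sinh x)) ^ 2 := by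
  have hbound : 2 * exp (-x) < arsinh (1 / sinh x) := by
    rw [one_div, arsinh_inv_sinh hx]
    have := lt_artanh ⟨exp_pos (-x), exp_lt_one_iff.2 (by linarith)⟩
    linarith
  refine ⟨hbound, ?_⟩
  calc 4 * exp (-2 * x) = (2 * exp (-x)) ^ 2 := by rw [mul_pow, ← exp_nat_mul]; ring_nf
    _ < arsinh (1 / sinh x) ^ 2 := pow_lt_pow_left₀ hbound (by positivity) two_ne_zero
end

section
/- The function f(x) = x·e^x / sinh(x/2) is strictly monotonically increasing on (0, ∞). -/
/-!
Writing `sinh (x / 2) = exp (x / 2) * (1 - exp (-x)) / 2` gives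
`f x = 2 * exp (x / 2) / ((1 - exp (-x)) / x)`. The numerator increases, and the denominator is
the slope of the secant of the strictly convex `exp` over `[-x, 0]`, which decreases in `x`.
-/

open Real Set

lemma sinh_half_eq_exp_half_mul (x : ℝ) : sinh (x / 2) = exp (x / 2) * (1 - exp (-x)) / 2 := by
  rw [sinh_eq, mul_sub, mul_one, ← exp_add]
  ring_nf

lemma one_sub_exp_neg_pos {x : ℝ} (hx : 0 < x) : 0 < 1 - exp (-x) :=
  sub_pos.2 (exp_lt_one_iff.2 (neg_neg_of_pos hx))

lemma strictAntiOn_one_sub_exp_neg_div : StrictAntiOn (fun x => (1 - exp (-x)) / x) (Ioi 0) := by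
  intro x (hx : 0 < x) y (hy : 0 < y) hxy
  have hsecant := strictConvexOn_exp.secant_strict_mono (mem_univ 0) (mem_univ (-y))
    (mem_univ (-x)) (by simpa using hy.ne') (by simpa using hx.ne') (neg_lt_neg hxy)
  rw [← neg_div_neg_eq, ← neg_div_neg_eq (exp (-x) - _)] at hsecant
  simpa using hsecant

lemma mul_exp_div_sinh_half_eq {x : ℝ} (hx : 0 < x) :
    x * exp x / sinh (x / 2) = 2 * exp (x / 2) / ((1 - exp (-x)) / x) := by
  have hexp : exp x = exp (x / 2) * exp (x / 2) := by rw [← exp_add, add_halves]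
  have := one_sub_exp_neg_pos hx
  rw [sinh_half_eq_exp_half_mul, hexp]
  field_simp

theorem stmt_7 :
    StrictMonoOn (fun x : ℝ => x * Real.exp x / Real.sinh (x / 2))
      (Set.Ioi (0 : ℝ)) := by
  intro x (hx : 0 < x) y (hy : 0 < y) hxy
  simp only [mul_exp_div_sinh_half_eq hx, mul_exp_div_sinh_half_eq hy]
  refine div_lt_div₀ ?_ (strictAntiOn_one_sub_exp_neg_div hx hy hxy).le (by positivity) ?_
  · gcongr
  · exact div_pos (one_sub_exp_neg_pos hy) hy
end
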